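/- The action of W on the interior of the Tits cone is such that the closed fundamental chamber C̄ is a fundamental domain: for every v in the Tits cone there exists w ∈ W with w(v) ∈ C̄, and if v, v' ∈ C̄ and w(v) = v' for some w ∈ W, then v = v'. -/

import Mathlib

open scoped Classical

/-- A geometric representation (with based root system) of a Coxeter system `cs`
on a real vector space `V`, preserving a symmetric bilinear form `form`, with
simple roots `root i` satisfying the standard inner products
`B(α_i, α_j) = -cos (π / m i j)` (with value `≤ -1` when `m i j = ∞`, encoded `0`). -/
structure GeomRep {B : Type*} {W : Type*} [Group W] (M : CoxeterMatrix B)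
    (cs : CoxeterSystem M W) (V : Type*) [AddCommGroup V] [Module ℝ V] where
  form : LinearMap.BilinForm ℝ V
  form_symm : ∀ u v : V, form u v = form v u
  ρ : W →* (V ≃ₗ[ℝ] V)
  ρ_faithful : Function.Injective ρ
  root : B → V
  root_indep : LinearIndependent ℝ root
  form_preserved : ∀ (w : W) (u v : V), form (ρ w u) (ρ w v) = form u v
  form_root_finite : ∀ i j : B, M i j ≠ 0 →
    form (root i) (root j) = - Real.cos (Real.pi / (M i j : ℝ))
  form_root_infinite : ∀ i j : B, M i j = 0 → form (root i) (root j) ≤ -1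
  simple_act : ∀ (i : B) (v : V),
    ρ (cs.simple i) v = v - (2 * form (root i) v) • root i

namespace GeomRep

variable {B : Type*} {W : Type*} [Group W] {M : CoxeterMatrix B}
  {cs : CoxeterSystem M W} {V : Type*} [AddCommGroup V] [Module ℝ V]
  (G : GeomRep M cs V)

/-- The root system `Φ = W · Δ`. -/
def Roots : Set V := {v | ∃ (w : W) (i : B), v = G.ρ w (G.root i)}

/-- `v` is a nonnegative linear combination of simple roots. -/
def IsNonnegComb (v : V) : Prop :=
  ∃ c : B →₀ ℝ, (∀ i, 0 ≤ c i) ∧ v = c.sum fun i a => a • G.root i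

/-- The set of positive roots `Φ⁺`. -/
def PosRoots : Set V := {v ∈ G.Roots | G.IsNonnegComb v}

/-- The set of negative roots `Φ⁻ = -Φ⁺`. -/
def NegRoots : Set V := {v ∈ G.Roots | G.IsNonnegComb (-v)}

/-- The reflection in a root `α`, as a linear endomorphism of `V`. -/
def refl (α : V) : Module.End ℝ V :=
  LinearMap.id - (2 : ℝ) • LinearMap.smulRight (G.form α) α

/-- The (left) inversion set `N(w) = Φ⁺ ∩ w(Φ⁻)`. -/
def invSet (w : W) : Set V := {β ∈ G.PosRoots | G.ρ w⁻¹ β ∈ G.NegRoots}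

/-- `β` dominates `α` : every `w` sending `β` negative sends `α` negative. -/
def Dominates (β α : V) : Prop := ∀ w : W, G.ρ w β ∈ G.NegRoots → G.ρ w α ∈ G.NegRoots

/-- A small root: a positive root dominating no positive root other than itself. -/
def IsSmall (β : V) : Prop :=
  β ∈ G.PosRoots ∧ ∀ α ∈ G.PosRoots, G.Dominates β α → α = β

/-- The conical (nonnegative) hull of a set. -/
def cone (X : Set V) : Set V :=
  {v | ∃ c : V →₀ ℝ, (∀ x, 0 ≤ c x) ∧ ↑c.support ⊆ X ∧ v = c.sum fun x a => a • x}

/-- Low element: its inversion set is the biconvex closure of its small inversions. -/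
def IsLow (Sm : Set V) (w : W) : Prop :=
  G.invSet w = cone (G.invSet w ∩ Sm) ∩ G.PosRoots

/-- The closed fundamental chamber. -/
def chamber : Set V := {v | ∀ i : B, 0 ≤ G.form v (G.root i)}

/-- The Tits cone `T = ⋃_{w ∈ W} w(C̄)`. -/
def titsCone : Set V := ⋃ w : W, ⇑(G.ρ w) '' G.chamber

end GeomRep

/-!
If `s_i` is not a right descent of `w`, then `w α_i` is a nonnegative combination of simple
roots. This goes by induction on `ℓ(w)`: pick a right descent `s_j` and split off the longest
reduced alternating right factor `⋯ s_i s_j` of `w`, so that `w = v · (⋯ s_i s_j)` with `v` having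
neither `s_i` nor `s_j` as right descent and the factor shorter than `m_ij`. The factor sends
`α_i` to `a α_i + b α_j` with `a, b` values of Chebyshev polynomials, which are `≥ 0` in that
range (`sin (kπ/m) ≥ 0`, or growth when `B(α_i, α_j) ≤ -1`); apply induction to `v`.

Hence, for a left descent `s_i` of `w`, `w⁻¹ α_i` is a negative combination, so if `v` and
`w v` both lie in `C̄` then `B(w v, α_i) = B(v, w⁻¹ α_i) ≤ 0` forces `s_i` to fix `w v`, and
induction on `ℓ(w)` applied to `s_i w` gives `w v = v`.
-/

section DihedralCoeff

open Polynomial Real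

/-- `dihedralCoeff c n = U_{n-1}(-c)`. For `c = B(α_i, α_j)` these are the coordinates of
`(⋯ s_i s_j) α_i` in the basis `α_i, α_j` of the plane of the dihedral subsystem. -/
noncomputable def dihedralCoeff (c : ℝ) (n : ℕ) : ℝ := (Chebyshev.U ℝ ((n : ℤ) - 1)).eval (-c)

theorem dihedralCoeff_zero (c : ℝ) : dihedralCoeff c 0 = 0 := by
  simp [dihedralCoeff]

theorem dihedralCoeff_one (c : ℝ) : dihedralCoeff c 1 = 1 := by
  simp [dihedralCoeff]

theorem dihedralCoeff_add_two (c : ℝ) (n : ℕ) :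
    dihedralCoeff c (n + 2) = -2 * c * dihedralCoeff c (n + 1) - dihedralCoeff c n := by
  have h := Chebyshev.U_add_two ℝ ((n : ℤ) - 1)
  simp only [dihedralCoeff, Nat.cast_add, Nat.cast_ofNat, Nat.cast_one]
  rw [show (n : ℤ) + 2 - 1 = (n : ℤ) - 1 + 2 by ring, show (n : ℤ) + 1 - 1 = (n : ℤ) - 1 + 1 by ring,
    h]
  simp only [eval_sub, eval_mul, eval_ofNat, eval_X]
  ring

theorem dihedralCoeff_nonneg_of_le_neg_one {c : ℝ} (hc : c ≤ -1) (n : ℕ) :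
    0 ≤ dihedralCoeff c n := by
  suffices h : ∀ n, 0 ≤ dihedralCoeff c n ∧ dihedralCoeff c n ≤ dihedralCoeff c (n + 1) from
    (h n).1
  intro n
  induction n with
  | zero => simp [dihedralCoeff_zero, dihedralCoeff_one]
  | succ n ih =>
    refine ⟨ih.1.trans ih.2, ?_⟩
    rw [dihedralCoeff_add_two]
    nlinarith [ih.1, ih.2]

theorem dihedralCoeff_neg_cos_mul_sin (θ : ℝ) (n : ℕ) :
    dihedralCoeff (-cos θ) n * sin θ = sin (n * θ) := by
  simp [dihedralCoeff]

theorem dihedralCoeff_neg_cos_nonneg {θ : ℝ} (hθ : 0 < θ) (hθπ : θ < π) {n : ℕ}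
    (hn : n * θ ≤ π) : 0 ≤ dihedralCoeff (-cos θ) n := by
  have hsin : 0 < sin θ := sin_pos_of_pos_of_lt_pi hθ hθπ
  refine (mul_nonneg_iff_of_pos_right hsin).mp ?_
  rw [dihedralCoeff_neg_cos_mul_sin]
  exact sin_nonneg_of_nonneg_of_le_pi (by positivity) hn

end DihedralCoeff

namespace CoxeterSystem

open List

variable {B : Type*} {W : Type*} [Group W] {M : CoxeterMatrix B} (cs : CoxeterSystem M W)

local prefix:100 "s" => cs.simple
local prefix:100 "π" => cs.wordProd
local prefix:100 "ℓ" => cs.length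

theorem not_isRightDescent_of_length_mul_alternatingWord_succ {v : W} {i j : B} {k : ℕ}
    (h : ℓ (v * π (alternatingWord i j (k + 1))) = ℓ v + (k + 1)) :
    ¬cs.IsRightDescent v (if Even k then j else i) := by
  intro hdesc
  rw [alternatingWord_succ', wordProd_cons, ← mul_assoc] at h
  have hmul := cs.length_mul_le (v * s (if Even k then j else i)) (π (alternatingWord i j k))
  have hword := cs.length_wordProd_le (alternatingWord i j k)
  rw [length_alternatingWord] at hword
  rw [isRightDescent_iff] at hdesc
  omega

theorem exists_alternatingWord_suffix {w : W} {j : B} (i : B) (hj : cs.IsRightDescent w j) :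
    ∃ v : W, ∃ k : ℕ, 1 ≤ k ∧ w = v * π (alternatingWord i j k) ∧
      ℓ w = ℓ v + k ∧ ¬cs.IsRightDescent v i ∧ ¬cs.IsRightDescent v j := by
  -- `π (alternatingWord i j k)` is taken to be the longest alternating reduced right factor of `w`.
  let P : ℕ → Prop := fun k => 1 ≤ k ∧ ℓ (w * (π (alternatingWord i j k))⁻¹) + k = ℓ w
  have hP1 : P 1 := by
    refine ⟨le_rfl, ?_⟩
    simpa [alternatingWord, isRightDescent_iff] using hj
  let k := Nat.findGreatest P (ℓ w)
  obtain ⟨hk1, hk⟩ : P k := Nat.findGreatest_spec (by have := hP1.2; omega) hP1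
  set v := w * (π (alternatingWord i j k))⁻¹ with hv
  have hw : w = v * π (alternatingWord i j k) := by simp [hv]
  have hnext : ¬cs.IsRightDescent v (if Even k then j else i) := by
    intro hdesc
    have hPk1 : P (k + 1) := by
      refine ⟨by omega, ?_⟩
      rw [alternatingWord_succ', wordProd_cons, mul_inv_rev, inv_simple, ← mul_assoc, ← hv]
      rw [isRightDescent_iff] at hdesc
      omega
    exact Nat.findGreatest_is_greatest (Nat.lt_succ_self k) (by have := hPk1.2; omega) hPk1
  clear_value v k
  obtain ⟨k', rfl⟩ : ∃ k', k = k' + 1 := ⟨k - 1, by omega⟩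
  have hlead : ¬cs.IsRightDescent v (if Even k' then j else i) :=
    cs.not_isRightDescent_of_length_mul_alternatingWord_succ (by rw [← hw]; omega)
  refine ⟨v, k' + 1, hk1, hw, by omega, ?_⟩
  by_cases hk' : Even k'
  · simp only [Nat.even_add_one, hk', not_true_eq_false, if_true, if_false] at hnext hlead
    exact ⟨hnext, hlead⟩
  · simp only [Nat.even_add_one, hk', not_false_eq_true, if_true, if_false] at hnext hlead
    exact ⟨hlead, hnext⟩

theorem lt_of_length_mul_alternatingWord {v : W} {i j : B} {k : ℕ} (hM : M i j ≠ 0)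
    (hlen : ℓ (v * π (alternatingWord i j k)) = ℓ v + k)
    (hi : ¬cs.IsRightDescent (v * π (alternatingWord i j k)) i) : k < M i j := by
  by_contra! hk
  have hword : ℓ (π (alternatingWord j i (k + 1))) < k + 1 := by
    have hle := cs.length_wordProd_le (alternatingWord j i (k + 1))
    have hne := cs.not_isReduced_alternatingWord j i (m := k + 1) (M.symmetric i j ▸ hM)
      (by rw [M.symmetric j i]; omega)
    unfold IsReduced at hne
    rw [length_alternatingWord] at hne hle
    omega
  rw [not_isRightDescent_iff, mul_assoc, ← wordProd_concat, ← alternatingWord_succ] at hi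
  have := cs.length_mul_le v (π (alternatingWord j i (k + 1)))
  omega

end CoxeterSystem

namespace GeomRep

open CoxeterSystem

variable {B : Type*} {W : Type*} [Group W] {M : CoxeterMatrix B}
  {cs : CoxeterSystem M W} {V : Type*} [AddCommGroup V] [Module ℝ V]
  (G : GeomRep M cs V)

theorem rho_mul_apply (a b : W) (x : V) : G.ρ (a * b) x = G.ρ a (G.ρ b x) := by
  rw [map_mul]; rfl

theorem rho_one_apply (x : V) : G.ρ 1 x = x := by
  rw [map_one]; rfl

theorem rho_inv_rho_apply (w : W) (x : V) : G.ρ w⁻¹ (G.ρ w x) = x := by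
  rw [← rho_mul_apply, inv_mul_cancel, rho_one_apply]

theorem form_root_self (i : B) : G.form (G.root i) (G.root i) = 1 := by
  simpa using G.form_root_finite i i (by simp)

theorem rho_simple_root_self (i : B) : G.ρ (cs.simple i) (G.root i) = -G.root i := by
  rw [G.simple_act, G.form_root_self]
  module

theorem isNonnegComb_root (i : B) : G.IsNonnegComb (G.root i) :=
  ⟨Finsupp.single i 1, fun j => by rw [Finsupp.single_apply]; split_ifs <;> norm_num,
    by simp [Finsupp.sum_single_index]⟩

theorem isNonnegComb_smul_add {a b : ℝ} {x y : V} (ha : 0 ≤ a) (hb : 0 ≤ b)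
    (hx : G.IsNonnegComb x) (hy : G.IsNonnegComb y) : G.IsNonnegComb (a • x + b • y) := by
  obtain ⟨c, hc, rfl⟩ := hx
  obtain ⟨d, hd, rfl⟩ := hy
  refine ⟨a • c + b • d, fun i => add_nonneg (mul_nonneg ha (hc i)) (mul_nonneg hb (hd i)), ?_⟩
  simp only [← Finsupp.linearCombination_apply, map_add, map_smul]

theorem form_nonneg_of_mem_chamber {v u : V} (hv : v ∈ G.chamber) (hu : G.IsNonnegComb u) :
    0 ≤ G.form v u := by
  obtain ⟨c, hc, rfl⟩ := hu
  rw [map_finsuppSum]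
  refine Finset.sum_nonneg fun i _ => ?_
  simp only [map_smul, smul_eq_mul]
  exact mul_nonneg (hc i) (hv i)

theorem rho_alternatingWord_root (i j : B) (k : ℕ) :
    G.ρ (cs.wordProd (alternatingWord i j k)) (G.root i) =
      if Even k then
        dihedralCoeff (G.form (G.root i) (G.root j)) (k + 1) • G.root i
          + dihedralCoeff (G.form (G.root i) (G.root j)) k • G.root j
      else
        dihedralCoeff (G.form (G.root i) (G.root j)) k • G.root i
          + dihedralCoeff (G.form (G.root i) (G.root j)) (k + 1) • G.root j := by
  have hji : G.form (G.root j) (G.root i) = G.form (G.root i) (G.root j) := G.form_symm _ _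
  induction k with
  | zero => simp [dihedralCoeff_zero, dihedralCoeff_one, alternatingWord]
  | succ k ih =>
    rw [alternatingWord_succ', wordProd_cons, rho_mul_apply, ih]
    rcases Nat.even_or_odd k with hk | hk
    · rw [if_pos hk, if_pos hk, if_neg (by simpa [Nat.even_add_one]), G.simple_act, map_add,
        map_smul, map_smul, hji, G.form_root_self, smul_eq_mul, smul_eq_mul, dihedralCoeff_add_two]
      module
    · rw [if_neg (Nat.not_even_iff_odd.2 hk), if_neg (Nat.not_even_iff_odd.2 hk),
        if_pos (by simpa [Nat.even_add_one]), G.simple_act, map_add, map_smul, map_smul,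
        G.form_root_self, smul_eq_mul, smul_eq_mul, dihedralCoeff_add_two]
      module

theorem dihedralCoeff_form_root_nonneg {i j : B} (hij : i ≠ j) {n : ℕ}
    (hn : M i j ≠ 0 → n ≤ M i j) : 0 ≤ dihedralCoeff (G.form (G.root i) (G.root j)) n := by
  rcases eq_or_ne (M i j) 0 with hM | hM
  · exact dihedralCoeff_nonneg_of_le_neg_one (G.form_root_infinite i j hM) n
  have hm : (2 : ℝ) ≤ M i j := by
    have := M.off_diagonal i j hij
    exact_mod_cast (show 2 ≤ M i j by omega)
  rw [G.form_root_finite i j hM]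
  apply dihedralCoeff_neg_cos_nonneg (by positivity)
  · exact div_lt_self Real.pi_pos (by linarith)
  · rw [mul_div_assoc', div_le_iff₀ (by positivity), mul_comm]
    gcongr
    exact_mod_cast hn hM

theorem exists_nonneg_rho_alternatingWord_root {i j : B} (hij : i ≠ j) {k : ℕ}
    (hk : M i j ≠ 0 → k < M i j) :
    ∃ a b : ℝ, 0 ≤ a ∧ 0 ≤ b ∧
      G.ρ (cs.wordProd (alternatingWord i j k)) (G.root i) = a • G.root i + b • G.root j := by
  have h₀ := G.dihedralCoeff_form_root_nonneg hij (n := k) fun hM => (hk hM).le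
  have h₁ := G.dihedralCoeff_form_root_nonneg hij (n := k + 1) hk
  rw [G.rho_alternatingWord_root]
  split_ifs
  exacts [⟨_, _, h₁, h₀, rfl⟩, ⟨_, _, h₀, h₁, rfl⟩]

theorem isNonnegComb_rho_root_of_not_isRightDescent {w : W} {i : B}
    (hi : ¬cs.IsRightDescent w i) : G.IsNonnegComb (G.ρ w (G.root i)) := by
  induction h : cs.length w using Nat.strong_induction_on generalizing w i with
  | _ n ih =>
  rcases eq_or_ne w 1 with rfl | hw1
  · rw [rho_one_apply]
    exact G.isNonnegComb_root i
  obtain ⟨j, hj⟩ := cs.exists_rightDescent_of_ne_one hw1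
  have hij : i ≠ j := by
    rintro rfl
    exact hi hj
  obtain ⟨v, k, hk1, rfl, hlen, hvi, hvj⟩ := cs.exists_alternatingWord_suffix i hj
  obtain ⟨a, b, ha, hb, hab⟩ := G.exists_nonneg_rho_alternatingWord_root hij
    fun hM => cs.lt_of_length_mul_alternatingWord hM hlen hi
  rw [rho_mul_apply, hab, map_add, map_smul, map_smul]
  exact G.isNonnegComb_smul_add ha hb (ih _ (by omega) hvi rfl) (ih _ (by omega) hvj rfl)

theorem isNonnegComb_neg_rho_inv_root_of_isLeftDescent {w : W} {i : B}
    (hi : cs.IsLeftDescent w i) : G.IsNonnegComb (-G.ρ w⁻¹ (G.root i)) := by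
  have hu : ¬cs.IsRightDescent (w⁻¹ * cs.simple i) i :=
    cs.isRightDescent_iff_not_isRightDescent_mul.mp (cs.isRightDescent_inv_iff.mpr hi)
  have hw : G.ρ w⁻¹ (G.root i) = -G.ρ (w⁻¹ * cs.simple i) (G.root i) := by
    rw [rho_mul_apply, rho_simple_root_self, map_neg, neg_neg]
  rw [hw, neg_neg]
  exact G.isNonnegComb_rho_root_of_not_isRightDescent hu

theorem rho_eq_self_of_mem_chamber {w : W} {v : V} (hv : v ∈ G.chamber)
    (hwv : G.ρ w v ∈ G.chamber) : G.ρ w v = v := by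
  induction h : cs.length w using Nat.strong_induction_on generalizing w with
  | _ n ih =>
  rcases eq_or_ne w 1 with rfl | hw1
  · exact rho_one_apply _ _
  obtain ⟨i, hi⟩ := cs.exists_leftDescent_of_ne_one hw1
  have hzero : G.form (G.ρ w v) (G.root i) = 0 := by
    refine le_antisymm ?_ (hwv i)
    calc G.form (G.ρ w v) (G.root i) = -G.form v (-G.ρ w⁻¹ (G.root i)) := by
          rw [← G.form_preserved w⁻¹, rho_inv_rho_apply, map_neg, neg_neg]
      _ ≤ 0 := neg_nonpos.mpr <| G.form_nonneg_of_mem_chamber hv <|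
          G.isNonnegComb_neg_rho_inv_root_of_isLeftDescent hi
  have hfix : G.ρ (cs.simple i) (G.ρ w v) = G.ρ w v := by
    rw [G.simple_act, G.form_symm, hzero, mul_zero, zero_smul, sub_zero]
  rw [← hfix, ← rho_mul_apply] at hwv ⊢
  exact ih _ (h ▸ hi) hwv rfl

end GeomRep

/-- The closed fundamental chamber is a fundamental domain for the `W`-action
on the Tits cone. -/
theorem chamber_fundamentalDomain {B : Type*} {W : Type*} [Group W] {M : CoxeterMatrix B}
    (cs : CoxeterSystem M W) {V : Type*} [AddCommGroup V] [Module ℝ V]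
    (G : GeomRep M cs V) :
    (∀ v ∈ G.titsCone, ∃ w : W, G.ρ w v ∈ G.chamber) ∧
      (∀ v ∈ G.chamber, ∀ v' ∈ G.chamber, ∀ w : W, G.ρ w v = v' → v = v') := by
  refine ⟨fun v hv => ?_, fun v hv v' hv' w hw => ?_⟩
  · obtain ⟨u, x, hx, rfl⟩ := Set.mem_iUnion.mp hv
    exact ⟨u⁻¹, by rwa [GeomRep.rho_inv_rho_apply]⟩
  · subst hw
    exact (G.rho_eq_self_of_mem_chamber hv hv').symm
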